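/- arXiv:1801.07816 — 3 statements merged into one kernel-verified Lean document; each statement's English description precedes it below -/
import Mathlib

section
/- The projected triple ratio of seven vectors in F⁴ factors as a ratio of two projected cross ratios: for v1,...,v7 ∈ F⁴ in general position, (1|234567) = (12|3457)/(13|2467), where (1|234567) = Δ(1235)Δ(1346)Δ(1427)/(Δ(1236)Δ(1347)Δ(1425)), (12|3457) = Δ(1235)Δ(1247)/(Δ(1237)Δ(1245)) and (13|2467) = Δ(1326)Δ(1347)/(Δ(1327)Δ(1346)). -/
/-!
Both projected cross ratios on the right share the denominator factor Δ(abcg), which cancels in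
their quotient; after the column swaps Δ(adbx) = -Δ(abdx) and Δ(acbx) = -Δ(abcx) the remaining
monomial in the determinants is the projected triple ratio.
-/

def det4 {F : Type*} [Field F] (u v w x : Fin 4 → F) : F :=
  Matrix.det (Matrix.of fun i j => ![u, v, w, x] j i)
/-- Projected cross ratio (i1 i2 | i3 i4 i5 i6). -/
def pcr {F : Type*} [Field F] (a b c d e f : Fin 4 → F) : F :=
  det4 a b c e * det4 a b d f / (det4 a b c f * det4 a b d e)
/-- Projected triple ratio (i1 | i2 i3 i4 i5 i6 i7). -/
def ptr {F : Type*} [Field F] (a b c d e f g : Fin 4 → F) : F :=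
  det4 a b c e * det4 a c d f * det4 a d b g /
    (det4 a b c f * det4 a c d g * det4 a d b e)

theorem det4_swap_cols_one_two {F : Type*} [Field F] (a b c d : Fin 4 → F) :
    det4 a c b d = -det4 a b c d := by
  have hswap : (Matrix.of fun i j => ![a, c, b, d] j i) =
      (Matrix.of fun i j => ![a, b, c, d] j i).submatrix id (Equiv.swap 1 2) := by
    ext i j
    fin_cases j <;> rfl
  rw [det4, hswap, Matrix.det_permute', Equiv.Perm.sign_swap (by decide)]
  simp [det4]

theorem ptr_eq_pcr_div_pcr {F : Type*} [Field F] (a b c d e f g : Fin 4 → F)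
    (h : det4 a b c g ≠ 0) :
    ptr a b c d e f g = pcr a b c d e g / pcr a c b d f g := by
  simp only [ptr, pcr, det4_swap_cols_one_two a b d, det4_swap_cols_one_two a b c]
  rw [div_div_div_eq, ← mul_div_mul_left _ _ h]
  ring

theorem stmt13 {F : Type*} [Field F] (v : Fin 7 → Fin 4 → F)
    (hgen : ∀ i j k l : Fin 7, i ≠ j → i ≠ k → i ≠ l → j ≠ k → j ≠ l → k ≠ l →
      det4 (v i) (v j) (v k) (v l) ≠ 0) :
    ptr (v 0) (v 1) (v 2) (v 3) (v 4) (v 5) (v 6)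
      = pcr (v 0) (v 1) (v 2) (v 3) (v 4) (v 6)
        / pcr (v 0) (v 2) (v 1) (v 3) (v 5) (v 6) :=
  ptr_eq_pcr_div_pcr _ _ _ _ _ _ _
    (hgen 0 1 2 6 (by decide) (by decide) (by decide) (by decide) (by decide) (by decide))
end

section
/- For seven vectors v1,...,v7 ∈ F⁴ in general position, setting x = (13|2764) and y = (12|3754) (projected cross ratios), one has (1|237564) = y/x, where (1|237564) is the projected triple ratio Δ(1235)Δ(1376)Δ(1724)/(Δ(1236)Δ(1374)Δ(1725)). -/
lemma det4_swap23 {F : Type*} [Field F] (u v w x : Fin 4 → F) :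
    det4 u w v x = - det4 u v w x := by
  have h : (Matrix.of fun i j => ![u, w, v, x] j i)
      = (Matrix.of fun i j => ![u, v, w, x] j i).submatrix id (Equiv.swap 1 2) := by
    ext i j; fin_cases j <;> simp [Equiv.swap_apply_def]
  rw [det4, det4, h, Matrix.det_permute']
  simp

theorem stmt15 {F : Type*} [Field F] (v : Fin 7 → Fin 4 → F)
    (hgen : ∀ i j k l : Fin 7, i ≠ j → i ≠ k → i ≠ l → j ≠ k → j ≠ l → k ≠ l →
      det4 (v i) (v j) (v k) (v l) ≠ 0) :
    ptr (v 0) (v 1) (v 2) (v 6) (v 4) (v 5) (v 3)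
      = pcr (v 0) (v 1) (v 2) (v 6) (v 4) (v 3)
        / pcr (v 0) (v 2) (v 1) (v 6) (v 5) (v 3) := by
  have h1234 := hgen 0 1 2 3 (by decide) (by decide) (by decide) (by decide) (by decide) (by decide)
  have h1235 := hgen 0 1 2 4 (by decide) (by decide) (by decide) (by decide) (by decide) (by decide)
  have h1236 := hgen 0 1 2 5 (by decide) (by decide) (by decide) (by decide) (by decide) (by decide)
  have h1274 := hgen 0 1 6 3 (by decide) (by decide) (by decide) (by decide) (by decide) (by decide)
  have h1275 := hgen 0 1 6 4 (by decide) (by decide) (by decide) (by decide) (by decide) (by decide)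
  have h1374 := hgen 0 2 6 3 (by decide) (by decide) (by decide) (by decide) (by decide) (by decide)
  have h1376 := hgen 0 2 6 5 (by decide) (by decide) (by decide) (by decide) (by decide) (by decide)
  unfold ptr pcr
  rw [det4_swap23 (v 0) (v 1) (v 6) (v 3), det4_swap23 (v 0) (v 1) (v 6) (v 4),
    det4_swap23 (v 0) (v 1) (v 2) (v 5), det4_swap23 (v 0) (v 1) (v 2) (v 3)]
  field_simp
end

section
/- For seven vectors v1,...,v7 ∈ F⁴ in general position, setting x = (13|2764) and y = (12|3754), with x, y ∉ {0,1} and the relevant determinants nonzero, the projected triple ratio satisfies (1|234567) = (1 − x⁻¹)/(1 − y⁻¹). -/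
lemma det4_expand {F : Type*} [Field F] (a b c d : Fin 4 → F) :
    det4 a b c d =
      a 0 * (b 1 * (c 2 * d 3 - c 3 * d 2) - b 2 * (c 1 * d 3 - c 3 * d 1)
        + b 3 * (c 1 * d 2 - c 2 * d 1))
      - a 1 * (b 0 * (c 2 * d 3 - c 3 * d 2) - b 2 * (c 0 * d 3 - c 3 * d 0)
        + b 3 * (c 0 * d 2 - c 2 * d 0))
      + a 2 * (b 0 * (c 1 * d 3 - c 3 * d 1) - b 1 * (c 0 * d 3 - c 3 * d 0)
        + b 3 * (c 0 * d 1 - c 1 * d 0))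
      - a 3 * (b 0 * (c 1 * d 2 - c 2 * d 1) - b 1 * (c 0 * d 2 - c 2 * d 0)
        + b 2 * (c 0 * d 1 - c 1 * d 0)) := by
  rw [det4, Matrix.det_succ_row_zero]
  simp [Fin.sum_univ_succ, Matrix.det_fin_three, Fin.succAbove, Matrix.submatrix,
    show (Fin.succ 2 : Fin 4) = 3 from rfl, show (Fin.succ 0 : Fin 4) = 1 from rfl,
    show (Fin.succ 1 : Fin 4) = 2 from rfl, show (Fin.castSucc (2:Fin 3) : Fin 4) = 2 from rfl,
    show (Fin.castSucc (1:Fin 3) : Fin 4) = 1 from rfl,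
    show (Fin.castSucc (0:Fin 3) : Fin 4) = 0 from rfl]
  ring

lemma plucker {F : Type*} [Field F] (a b c d e f : Fin 4 → F) :
    det4 a b c d * det4 a b e f - det4 a b c e * det4 a b d f
      + det4 a b c f * det4 a b d e = 0 := by
  simp only [det4_expand]; ring

lemma det4_sw23 {F : Type*} [Field F] (a b c d : Fin 4 → F) :
    det4 a b c d = - det4 a c b d := by simp only [det4_expand]; ring

lemma det4_sw34 {F : Type*} [Field F] (a b c d : Fin 4 → F) :
    det4 a b c d = - det4 a b d c := by simp only [det4_expand]; ring

lemma det4_cyc {F : Type*} [Field F] (a b c d : Fin 4 → F) :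
    det4 a b c d = det4 a d b c := by simp only [det4_expand]; ring

theorem stmt16 {F : Type*} [Field F] (v : Fin 7 → Fin 4 → F)
    (hgen : ∀ i j k l : Fin 7, i ≠ j → i ≠ k → i ≠ l → j ≠ k → j ≠ l → k ≠ l →
      det4 (v i) (v j) (v k) (v l) ≠ 0)
    (hx0 : pcr (v 0) (v 2) (v 1) (v 6) (v 5) (v 3) ≠ 0)
    (hx1 : pcr (v 0) (v 2) (v 1) (v 6) (v 5) (v 3) ≠ 1)
    (hy0 : pcr (v 0) (v 1) (v 2) (v 6) (v 4) (v 3) ≠ 0)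
    (hy1 : pcr (v 0) (v 1) (v 2) (v 6) (v 4) (v 3) ≠ 1) :
    ptr (v 0) (v 1) (v 2) (v 3) (v 4) (v 5) (v 6)
      = (1 - (pcr (v 0) (v 2) (v 1) (v 6) (v 5) (v 3))⁻¹)
        / (1 - (pcr (v 0) (v 1) (v 2) (v 6) (v 4) (v 3))⁻¹) := by
  have g : ∀ i j k l : Fin 7, (i ≠ j ∧ i ≠ k ∧ i ≠ l ∧ j ≠ k ∧ j ≠ l ∧ k ≠ l) →
      det4 (v i) (v j) (v k) (v l) ≠ 0 := fun i j k l ⟨h1, h2, h3, h4, h5, h6⟩ =>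
    hgen i j k l h1 h2 h3 h4 h5 h6
  -- nonzero dets
  have n126 := g 0 1 2 6 (by decide)
  have n235 := g 0 2 3 5 (by decide)
  have n125 := g 0 1 2 5 (by decide)
  have n236 := g 0 2 3 6 (by decide)
  have n314 := g 0 3 1 4 (by decide)
  have n124 := g 0 1 2 4 (by decide)
  have n316 := g 0 3 1 6 (by decide)
  have n213 := g 0 2 1 3 (by decide)
  have n265 := g 0 2 6 5 (by decide)
  have n215 := g 0 2 1 5 (by decide)
  have n263 := g 0 2 6 3 (by decide)
  have n123 := g 0 1 2 3 (by decide)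
  have n164 := g 0 1 6 4 (by decide)
  have n163 := g 0 1 6 3 (by decide)
  have hpx := plucker (v 0) (v 2) (v 1) (v 6) (v 5) (v 3)
  have hpy := plucker (v 0) (v 1) (v 2) (v 6) (v 4) (v 3)
  -- canonicalizations
  have s1 : det4 (v 0) (v 2) (v 1) (v 6) = - det4 (v 0) (v 1) (v 2) (v 6) := det4_sw23 ..
  have s2 : det4 (v 0) (v 2) (v 5) (v 3) = - det4 (v 0) (v 2) (v 3) (v 5) := det4_sw34 ..
  have s3 : det4 (v 0) (v 2) (v 1) (v 5) = - det4 (v 0) (v 1) (v 2) (v 5) := det4_sw23 ..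
  have s4 : det4 (v 0) (v 2) (v 6) (v 3) = - det4 (v 0) (v 2) (v 3) (v 6) := det4_sw34 ..
  have s5 : det4 (v 0) (v 1) (v 6) (v 3) = det4 (v 0) (v 3) (v 1) (v 6) := det4_cyc ..
  have s6 : det4 (v 0) (v 1) (v 4) (v 3) = det4 (v 0) (v 3) (v 1) (v 4) := det4_cyc ..
  have hx' : (1 : F) - (pcr (v 0) (v 2) (v 1) (v 6) (v 5) (v 3))⁻¹
      = det4 (v 0) (v 1) (v 2) (v 6) * det4 (v 0) (v 2) (v 3) (v 5)
        / (det4 (v 0) (v 1) (v 2) (v 5) * det4 (v 0) (v 2) (v 3) (v 6)) := by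
    rw [s1, s2, s3, s4] at hpx
    rw [pcr, s3, s4]
    field_simp
    linear_combination -hpx
  have hy' : (1 : F) - (pcr (v 0) (v 1) (v 2) (v 6) (v 4) (v 3))⁻¹
      = det4 (v 0) (v 1) (v 2) (v 6) * det4 (v 0) (v 3) (v 1) (v 4)
        / (det4 (v 0) (v 1) (v 2) (v 4) * det4 (v 0) (v 3) (v 1) (v 6)) := by
    rw [s5, s6] at hpy
    rw [pcr, s5]
    field_simp
    linear_combination -hpy
  rw [hx', hy', ptr]
  field_simp
end
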